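/- arXiv:1911.04810 — 6 statements merged into one kernel-verified Lean document; each statement's English description precedes it below -/
import Mathlib

section
/- If S is a finite set of points in a bounded domain Ω ⊂ ℝⁿ, then S satisfies the outward ball property: for every nonempty relatively closed set T ⊂ Ω with T ≠ Ω, there exist R > 0 and x₀ ∈ Ω \ (T ∪ S) such that the open ball B_R(x₀) is contained in Ω \ (T ∪ S) and the sphere ∂B_R(x₀) meets T. -/
open Metric Set

/-- A set `S ⊆ Ω` satisfies the *outward ball property* if for every nonempty
relatively closed strict subset `T` of `Ω` there exist `R > 0` and
`x₀ ∈ Ω \ (T ∪ S)` with `B_R(x₀) ⊆ Ω \ (T ∪ S)` and `∂B_R(x₀) ∩ T ≠ ∅`. -/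
def OutwardBallProperty {n : ℕ} (Ω S : Set (EuclideanSpace ℝ (Fin n))) : Prop :=
  ∀ T : Set (EuclideanSpace ℝ (Fin n)), T.Nonempty → T ⊆ Ω → T ≠ Ω →
    (∃ C : Set (EuclideanSpace ℝ (Fin n)), IsClosed C ∧ T = C ∩ Ω) →
    ∃ R : ℝ, 0 < R ∧ ∃ x₀ ∈ Ω \ (T ∪ S),
      Metric.ball x₀ R ⊆ Ω \ (T ∪ S) ∧ (Metric.sphere x₀ R ∩ T).Nonempty

/-!
Since `Ω` is connected, the relatively closed set `T` touches `Ω \ T` at some point `t ∈ T`.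
Pick `y ∈ Ω \ T` very close to `t`: the largest ball around `y` missing `T` stays inside `Ω`
and touches `T` at a nearest point `z`. A small ball internally tangent to it at `z` then also
avoids the finite set `S`, because near `z` the only possible point of `S` is `z` itself, which
lies on the boundary sphere.
-/

theorem IsPreconnected.exists_mem_closure_diff {X : Type*} [TopologicalSpace X] {Ω T : Set X}
    (hΩ : IsPreconnected Ω) (hT : closure T ∩ Ω ⊆ T) (hTΩ : T ⊆ Ω) (hTne : T.Nonempty)
    (hΩT : (Ω \ T).Nonempty) : ∃ t ∈ T, t ∈ closure (Ω \ T) := by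
  have hcover : Ω ⊆ closure T ∪ closure (Ω \ T) := fun x hx =>
    (em (x ∈ T)).imp (fun hxT => subset_closure hxT) fun hxT => subset_closure ⟨hx, hxT⟩
  obtain ⟨t, htΩ, htT, htc⟩ := isPreconnected_closed_iff.1 hΩ _ _ isClosed_closure
    isClosed_closure hcover
    (hTne.mono fun x hx => ⟨hTΩ hx, subset_closure hx⟩)
    (hΩT.mono fun x hx => ⟨hx.1, subset_closure hx⟩)
  exact ⟨t, hT ⟨htT, htΩ⟩, htc⟩

theorem exists_ball_subset_diff_sphere_inter_nonempty {X : Type*} [PseudoMetricSpace X]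
    [ProperSpace X] {Ω T : Set X} (hΩ : IsOpen Ω) (hT : closure T ∩ Ω ⊆ T) (hTΩ : T ⊆ Ω)
    {t : X} (ht : t ∈ T) (htc : t ∈ closure (Ω \ T)) :
    ∃ y, ∃ d > 0, ball y d ⊆ Ω \ T ∧ (sphere y d ∩ T).Nonempty := by
  obtain ⟨r, hr, hrΩ⟩ := isOpen_iff.1 hΩ t (hTΩ ht)
  obtain ⟨y, ⟨hyΩ, hyT⟩, hty⟩ := Metric.mem_closure_iff.1 htc (r / 2) (half_pos hr)
  have hTne : T.Nonempty := ⟨t, ht⟩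
  have hd : 0 < infDist y T :=
    (infDist_pos_iff_notMem_closure hTne).1 fun hyc => hyT (hT ⟨hyc, hyΩ⟩)
  have hdt : infDist y T ≤ dist y t := infDist_le_dist_of_mem ht
  have hclosedBall : closedBall y (infDist y T) ⊆ ball t r :=
    closedBall_subset_ball' (by rw [dist_comm] at hty; linarith)
  obtain ⟨z, hzc, hzd⟩ := exists_mem_closure_infDist_eq_dist hTne y
  have hzs : z ∈ sphere y (infDist y T) := mem_sphere'.2 hzd.symm
  have hball : ball y (infDist y T) ⊆ Ω \ T := fun v hv =>
    ⟨hrΩ (hclosedBall (ball_subset_closedBall hv)), ball_infDist_subset_compl hv⟩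
  exact ⟨y, infDist y T, hd, hball, z, hzs,
    hT ⟨hzc, hrΩ (hclosedBall (sphere_subset_closedBall hzs))⟩⟩

theorem exists_ball_subset_ball_of_mem_sphere {E : Type*} [NormedAddCommGroup E]
    [NormedSpace ℝ E] {y z : E} {d s : ℝ} (hz : z ∈ sphere y d) (hs : 0 < s) (hsd : s ≤ d) :
    ∃ x, ball x s ⊆ ball y d ∧ z ∈ sphere x s := by
  have hd : 0 < d := hs.trans_le hsd
  have hzy : dist z y = d := hz
  refine ⟨AffineMap.lineMap z y (s / d), ball_subset_ball' ?_, mem_sphere'.2 ?_⟩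
  · rw [dist_lineMap_right, hzy, Real.norm_of_nonneg (sub_nonneg.2 ((div_le_one hd).2 hsd)),
      sub_mul, div_mul_cancel₀ s hd.ne']
    linarith
  · rw [dist_lineMap_left, hzy, Real.norm_of_nonneg (by positivity)]
    field_simp

theorem exists_ball_subset_ball_diff_of_mem_sphere {E : Type*} [NormedAddCommGroup E]
    [NormedSpace ℝ E] {S : Set E} (hS : S.Finite) {y z : E} {d : ℝ} (hd : 0 < d)
    (hz : z ∈ sphere y d) : ∃ s > 0, ∃ x, ball x s ⊆ ball y d \ S ∧ z ∈ sphere x s := by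
  obtain ⟨ε, hε, hεS⟩ := isOpen_iff.1 (hS.sdiff (t := {z})).isClosed.isOpen_compl z
    fun h => h.2 rfl
  have hs : 0 < min d (ε / 2) := lt_min hd (half_pos hε)
  obtain ⟨x, hxy, hzx⟩ := exists_ball_subset_ball_of_mem_sphere hz hs (min_le_left _ _)
  have hxz : dist z x = min d (ε / 2) := hzx
  refine ⟨_, hs, x, fun v hv => ⟨hxy hv, fun hvS => ?_⟩, hzx⟩
  -- the only point of `S` in `ball z ε` is `z`, which lies on the sphere
  have hvz : v = z := by
    by_contra hne
    refine hεS (ball_subset_ball' ?_ hv) ⟨hvS, hne⟩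
    rw [dist_comm, hxz]
    linarith [min_le_right d (ε / 2)]
  exact (mem_ball.1 hv).ne (hvz ▸ hxz)

theorem stmt0_general {n : ℕ} (Ω S : Set (EuclideanSpace ℝ (Fin n)))
    (hΩo : IsOpen Ω) (hΩc : IsConnected Ω)
    (hSfin : S.Finite) :
    OutwardBallProperty Ω S := by
  intro T hTne hTΩ hTneq ⟨C, hC, hTC⟩
  have hT : closure T ∩ Ω ⊆ T := by
    rw [hTC]
    exact inter_subset_inter_left _ (closure_minimal inter_subset_left hC)
  obtain ⟨t, htT, htc⟩ := hΩc.isPreconnected.exists_mem_closure_diff hT hTΩ hTne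
    (sdiff_nonempty.2 fun h => hTneq (hTΩ.antisymm h))
  obtain ⟨y, d, hd, hyd, z, hzd, hzT⟩ :=
    exists_ball_subset_diff_sphere_inter_nonempty hΩo hT hTΩ htT htc
  obtain ⟨s, hs, x, hxs, hzx⟩ := exists_ball_subset_ball_diff_of_mem_sphere hSfin hd hzd
  have hball : ball x s ⊆ Ω \ (T ∪ S) := by
    rw [← sdiff_sdiff]
    exact hxs.trans (sdiff_subset_sdiff_left hyd)
  exact ⟨s, hs, x, hball (mem_ball_self hs), hball, z, hzx, hzT⟩

theorem stmt0 {n : ℕ} (Ω S : Set (EuclideanSpace ℝ (Fin n)))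
    (hΩo : IsOpen Ω) (hΩc : IsConnected Ω) (hΩb : Bornology.IsBounded Ω)
    (hSfin : S.Finite) (hSΩ : S ⊆ Ω) :
    OutwardBallProperty Ω S :=
  stmt0_general Ω S hΩo hΩc hSfin
end

section
/- Let Ω = (-1,1)² ⊂ ℝ² and S' = {(x₁,x₂) ∈ Ω : x₁ = 0 or x₂ = 0}. Then S' does not satisfy the outward ball property; specifically, taking T = {(0,0)}, every open ball B_R(x) ⊂ Ω whose boundary sphere contains (0,0) satisfies B_R(x) ∩ S' ≠ ∅. -/
open Metric Set

/-- The open square `(-1,1)²`. -/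
def OmegaSq : Set (EuclideanSpace ℝ (Fin 2)) :=
  {x | x 0 ∈ Set.Ioo (-1 : ℝ) 1 ∧ x 1 ∈ Set.Ioo (-1 : ℝ) 1}

/-- The union of the coordinate axes inside the square. -/
def CrossSet : Set (EuclideanSpace ℝ (Fin 2)) :=
  {x | x ∈ OmegaSq ∧ (x 0 = 0 ∨ x 1 = 0)}

lemma key : (∀ (x : EuclideanSpace ℝ (Fin 2)) (R : ℝ), 0 < R →
      Metric.ball x R ⊆ OmegaSq →
      (0 : EuclideanSpace ℝ (Fin 2)) ∈ Metric.sphere x R →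
      (Metric.ball x R ∩ CrossSet).Nonempty) := by
  intro x R hR hsub hsph
  have hdist : dist (0 : EuclideanSpace ℝ (Fin 2)) x = R := hsph
  have hsq : (x 0) ^ 2 + (x 1) ^ 2 = R ^ 2 := by
    rw [EuclideanSpace.dist_eq, Fin.sum_univ_two] at hdist
    have h0 : (0 : EuclideanSpace ℝ (Fin 2)) 0 = 0 := rfl
    have h1 : (0 : EuclideanSpace ℝ (Fin 2)) 1 = 0 := rfl
    rw [h0, h1, Real.dist_eq, Real.dist_eq] at hdist
    have := congrArg (· ^ 2) hdist
    simp only at this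
    rw [Real.sq_sqrt (by positivity), sq_abs, sq_abs] at this
    nlinarith [this]
  by_cases hb : x 1 = 0
  · refine ⟨x, Metric.mem_ball_self hR, ?_, Or.inr hb⟩
    exact hsub (Metric.mem_ball_self hR)
  · set p : EuclideanSpace ℝ (Fin 2) := (WithLp.equiv 2 (Fin 2 → ℝ)).symm ![0, x 1] with hp
    have hp0 : p 0 = 0 := rfl
    have hp1 : p 1 = x 1 := rfl
    have hdp : dist p x = |x 0| := by
      rw [EuclideanSpace.dist_eq, Fin.sum_univ_two, hp0, hp1, Real.dist_eq, Real.dist_eq,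
        sq_abs, sq_abs, sub_self]
      rw [show (0 - x 0) ^ 2 + 0 ^ 2 = (x 0) ^ 2 by ring]
      exact Real.sqrt_sq_eq_abs _
    have hlt : |x 0| < R := by
      have h1 : (x 1) ^ 2 > 0 := by positivity
      have : (x 0) ^ 2 < R ^ 2 := by nlinarith
      have hRnn : 0 ≤ R := le_of_lt hR
      nlinarith [abs_nonneg (x 0), sq_abs (x 0)]
    have hpball : p ∈ Metric.ball x R := by rwa [Metric.mem_ball, hdp]
    exact ⟨p, hpball, hsub hpball, Or.inl hp0⟩

theorem stmt1 :
    (¬ OutwardBallProperty OmegaSq CrossSet) ∧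
    (∀ (x : EuclideanSpace ℝ (Fin 2)) (R : ℝ), 0 < R →
      Metric.ball x R ⊆ OmegaSq →
      (0 : EuclideanSpace ℝ (Fin 2)) ∈ Metric.sphere x R →
      (Metric.ball x R ∩ CrossSet).Nonempty) := by
  refine ⟨?_, key⟩
  intro h
  have h0Ω : (0 : EuclideanSpace ℝ (Fin 2)) ∈ OmegaSq := by
    constructor <;> · show (0:ℝ) ∈ Set.Ioo (-1:ℝ) 1; norm_num
  set q : EuclideanSpace ℝ (Fin 2) := (WithLp.equiv 2 (Fin 2 → ℝ)).symm ![1/2, 1/2] with hq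
  have hqΩ : q ∈ OmegaSq := by
    constructor
    · show (1/2 : ℝ) ∈ Set.Ioo (-1:ℝ) 1; norm_num
    · show (1/2 : ℝ) ∈ Set.Ioo (-1:ℝ) 1; norm_num
  have hq0 : q ≠ 0 := by
    intro hc
    have : q 0 = (0 : EuclideanSpace ℝ (Fin 2)) 0 := by rw [hc]
    have h1 : (1/2 : ℝ) = 0 := this
    norm_num at h1
  obtain ⟨R, hR, x₀, hx₀, hball, z, hzs, hzT⟩ :=
    h {0} ⟨0, rfl⟩ (by simpa using h0Ω)
      (by
        intro hc
        exact hq0 (by have := hqΩ; rw [← hc] at this; exact this))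
      ⟨{0}, isClosed_singleton, by
        ext y; simp only [Set.mem_inter_iff, Set.mem_singleton_iff]
        constructor
        · rintro rfl; exact ⟨rfl, h0Ω⟩
        · rintro ⟨rfl, _⟩; rfl⟩
  have hz0 : z = 0 := hzT
  subst hz0
  have hsub : Metric.ball x₀ R ⊆ OmegaSq := fun y hy => (hball hy).1
  obtain ⟨w, hwball, hwC⟩ := key x₀ R hR hsub hzs
  exact (hball hwball).2 (Or.inr hwC)
end

section
/- Let Ω = (-1,1)² ⊂ ℝ² and S' = {(x₁,x₂) ∈ Ω : x₁ = 1/(2n) for some n ∈ ℕ, n ≥ 1}. Then S' does not satisfy the outward ball property: taking T = (-1,0] × (-1,1) ⊂ Ω, every open ball B_R(x₀) ⊂ Ω \ (T ∪ S') with ∂B_R(x₀) ∩ T ≠ ∅ fails to exist. -/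
open Metric Set

/-- The countable family of vertical lines `x₁ = 1/(2n)`, `n ≥ 1`, inside the square. -/
def LinesSet : Set (EuclideanSpace ℝ (Fin 2)) :=
  {x | x ∈ OmegaSq ∧ ∃ m : ℕ, 1 ≤ m ∧ x 0 = 1 / (2 * (m : ℝ))}

/-- The relatively closed set `T = (-1,0] × (-1,1)`. -/
def TSet : Set (EuclideanSpace ℝ (Fin 2)) :=
  {x | x ∈ OmegaSq ∧ x 0 ≤ 0}

/-!
A ball `B_R(x₀)` avoiding `T` lies in the half plane `x₁ > 0`, so `R ≤ x₀ 0`; a point of `T` on its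
boundary forces `x₀ 0 ≤ R`. Hence the ball projects onto the interval `(0, 2R)` of the first
coordinate, which contains some `1/(2m)`, so the ball meets the line `x₁ = 1/(2m)` of `LinesSet`.
-/

lemma EuclideanSpace.exists_mem_ball_apply_eq {ι : Type*} [Fintype ι] [DecidableEq ι]
    (x₀ : EuclideanSpace ℝ ι) (R : ℝ) (i : ι) {c : ℝ} (hc : c ∈ Ioo (x₀ i - R) (x₀ i + R)) :
    ∃ p ∈ ball x₀ R, p i = c := by
  refine ⟨x₀ + EuclideanSpace.single i (c - x₀ i), ?_, by simp⟩
  rw [mem_ball, dist_eq_norm, add_sub_cancel_left, PiLp.norm_single, Real.norm_eq_abs, abs_lt]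
  constructor <;> linarith [hc.1, hc.2]

lemma EuclideanSpace.abs_apply_sub_le_dist {ι : Type*} [Fintype ι] (x y : EuclideanSpace ℝ ι) (i : ι) :
    |x i - y i| ≤ dist x y := by
  simpa [Real.dist_eq] using PiLp.dist_apply_le x y i

lemma not_exists_ball_sphere_meets_TSet : ¬ ∃ R : ℝ, 0 < R ∧ ∃ x₀ : EuclideanSpace ℝ (Fin 2),
    ball x₀ R ⊆ OmegaSq \ (TSet ∪ LinesSet) ∧ (sphere x₀ R ∩ TSet).Nonempty := by
  rintro ⟨R, hR, x₀, hball, y, hy_sphere, -, hy0⟩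
  have hpos : ∀ z ∈ ball x₀ R, 0 < z 0 := fun z hz =>
    not_le.mp fun h => (hball hz).2 (Or.inl ⟨(hball hz).1, h⟩)
  have hcenter : 0 < x₀ 0 := hpos x₀ (mem_ball_self hR)
  have hR_le : R ≤ x₀ 0 := by
    by_contra! h
    obtain ⟨p, hp, hp0⟩ :=
      EuclideanSpace.exists_mem_ball_apply_eq x₀ R 0 (c := 0) ⟨by linarith, by linarith⟩
    exact (hpos p hp).ne' hp0
  have hle_R : x₀ 0 ≤ R := by
    have := EuclideanSpace.abs_apply_sub_le_dist y x₀ 0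
    rw [mem_sphere.mp hy_sphere, abs_le] at this
    linarith
  obtain ⟨n, hn⟩ := exists_nat_one_div_lt hR
  set m : ℕ := n + 1
  have hc_pos : 0 < 1 / (2 * (m : ℝ)) := by positivity
  have hc_lt : 1 / (2 * (m : ℝ)) < R := by
    calc 1 / (2 * (m : ℝ)) ≤ 1 / (n + 1) := by push_cast [m]; gcongr; linarith
      _ < R := hn
  obtain ⟨p, hp, hp0⟩ := EuclideanSpace.exists_mem_ball_apply_eq x₀ R 0
    (c := 1 / (2 * (m : ℝ))) ⟨by linarith, by linarith⟩
  exact (hball hp).2 (Or.inr ⟨(hball hp).1, m, Nat.le_add_left 1 n, hp0⟩)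

theorem stmt2 :
    (¬ OutwardBallProperty OmegaSq LinesSet) ∧
    ¬ ∃ R : ℝ, 0 < R ∧ ∃ x₀ : EuclideanSpace ℝ (Fin 2),
        Metric.ball x₀ R ⊆ OmegaSq \ (TSet ∪ LinesSet) ∧
        (Metric.sphere x₀ R ∩ TSet).Nonempty := by
  refine ⟨fun h => ?_, not_exists_ball_sphere_meets_TSet⟩
  have hne : TSet.Nonempty := ⟨0, by simp [TSet, OmegaSq]⟩
  have hne_Ω : TSet ≠ OmegaSq := fun h => by
    have hq : (!₂[1 / 2, 0] : EuclideanSpace ℝ (Fin 2)) ∈ OmegaSq := by norm_num [OmegaSq]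
    rw [← h] at hq
    norm_num [TSet] at hq
  have hrel_closed : TSet = {x | x 0 ≤ 0} ∩ OmegaSq := inter_comm _ _
  obtain ⟨R, hR, x₀, -, hball, hsphere⟩ := h TSet hne (fun _ hx => hx.1) hne_Ω
    ⟨_, isClosed_le (EuclideanSpace.proj (0 : Fin 2)).continuous continuous_const, hrel_closed⟩
  exact not_exists_ball_sphere_meets_TSet ⟨R, hR, x₀, hball, hsphere⟩
end

section
/- Let Ω = B_R(0) \ closure(B_{R-ε}(0)) ⊂ ℝⁿ, k = 2n(2/R+1)+3, ε ∈ (0, min{1,R/2}), Λ : (0,ε] → (0,∞) continuous non-increasing integrable with ∫₀^ε Λ < 1/k, and suppose the coefficients a_{ij}, b_i, c of a linear operator L[u] = Σ a_{ij} u_{x_i x_j} + Σ b_i u_{x_i} + c u satisfy: |y|² ≤ Σ a_{ij}(x) y_i y_j ≤ Λ(R−|x|)|y|² for all x ∈ Ω, y ∈ ℝⁿ; |b_i(x)| ≤ Λ(R−|x|); and −c(x) ≤ Λ(R−|x|)/(R−|x|). Define ṽ(x) = f(R−|x|) with f(r) = r + k∫₀^r∫₀^s Λ(t)dt ds. Then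 L[ṽ](x) ≥ Λ(R−|x|) > 0 for all x ∈ Ω. -/
/-!
Write `r = ‖x‖`, `d = R - r` and `x̂ = x / r`. The barrier `ṽ = f(R - ‖·‖)` is radial, with gradient
`-f'(d) x̂` and Hessian `f''(d) x̂ x̂ᵀ - (f'(d) / r) (I - x̂ x̂ᵀ)`. Here `f'' = kΛ`, and the smallness
of `∫ Λ` gives `1 ≤ f' ≤ 2` and `d ≤ f(d) ≤ 2d`. Ellipticity then bounds the second-order part
below by `k Λ(d) - (2 / r) n Λ(d)`, the drift by `-2 n Λ(d)` and the zeroth-order part by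
`-2 Λ(d)`; since `r > R / 2` on the annulus, the choice of `k` leaves `Λ(d)`.
-/

open Set Metric MeasureTheory Filter Topology

/-- `pd i u` is the `i`-th partial derivative of `u`. -/
noncomputable def pd {n : ℕ} (i : Fin n) (u : EuclideanSpace ℝ (Fin n) → ℝ) :
    EuclideanSpace ℝ (Fin n) → ℝ :=
  fun x => fderiv ℝ u x (EuclideanSpace.single i 1)

noncomputable def primitive (g : ℝ → ℝ) (r : ℝ) : ℝ := ∫ t in Ioc 0 r, g t

section Primitive

variable {g : ℝ → ℝ} {d e : ℝ}

lemma hasDerivAt_primitive (hd : d ∈ Ioo 0 e) (hcont : ContinuousOn g (Ioo 0 e))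
    (hint : IntegrableOn g (Ioc 0 d)) : HasDerivAt (primitive g) (g d) d := by
  have hint' : IntervalIntegrable g volume 0 d :=
    (intervalIntegrable_iff_integrableOn_Ioc_of_le hd.1.le).2 hint
  refine (intervalIntegral.integral_hasDerivAt_right hint'
    (hcont.stronglyMeasurableAtFilter isOpen_Ioo d hd)
    (hcont.continuousAt (isOpen_Ioo.mem_nhds hd))).congr_of_eventuallyEq ?_
  filter_upwards [eventually_gt_nhds hd.1] with u hu
  rw [primitive, intervalIntegral.integral_of_le hu.le]

lemma primitive_nonneg (hg : ∀ t ∈ Ioc 0 d, 0 ≤ g t) : 0 ≤ primitive g d :=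
  setIntegral_nonneg measurableSet_Ioc hg

lemma primitive_monotoneOn (hg : ∀ t ∈ Ioc 0 e, 0 ≤ g t) (hint : IntegrableOn g (Ioc 0 e)) :
    MonotoneOn (primitive g) (Icc 0 e) := fun _ _ _ hb hab =>
  setIntegral_mono_set (hint.mono_set (Ioc_subset_Ioc_right hb.2))
    ((ae_restrict_iff' measurableSet_Ioc).2
      (.of_forall fun t ht => hg t ⟨ht.1, ht.2.trans hb.2⟩))
    (Ioc_subset_Ioc_right hab).eventuallyLE

lemma MonotoneOn.integrableOn_Ioc (hg : MonotoneOn g (Icc 0 e)) (hd : d ∈ Icc 0 e) :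
    IntegrableOn g (Ioc 0 d) := by
  rw [← intervalIntegrable_iff_integrableOn_Ioc_of_le hd.1]
  exact (hg.mono (by rw [uIcc_of_le hd.1]; exact Icc_subset_Icc_right hd.2)).intervalIntegrable

lemma primitive_le_mul (hg : MonotoneOn g (Icc 0 e)) (hd : d ∈ Icc 0 e) :
    primitive g d ≤ d * g e := calc
  primitive g d ≤ ∫ _ in Ioc 0 d, g e :=
    setIntegral_mono_on (hg.integrableOn_Ioc hd) (integrableOn_const (by simp))
      measurableSet_Ioc fun t ht =>
        hg ⟨ht.1.le, ht.2.trans hd.2⟩ ⟨hd.1.trans hd.2, le_rfl⟩ (ht.2.trans hd.2)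
  _ = d * g e := by simp [Real.volume_real_Ioc_of_le hd.1]

end Primitive

noncomputable def profile (k : ℝ) (Λ : ℝ → ℝ) (r : ℝ) : ℝ :=
  r + k * primitive (primitive Λ) r

section Profile

variable {Λ : ℝ → ℝ} {k d ε : ℝ}

lemma primitive_mem_Icc (hΛ : ∀ t ∈ Ioc 0 ε, 0 ≤ Λ t) (hint : IntegrableOn Λ (Ioc 0 ε))
    (hd : d ∈ Icc 0 ε) : primitive Λ d ∈ Icc 0 (primitive Λ ε) :=
  ⟨primitive_nonneg fun t ht => hΛ t ⟨ht.1, ht.2.trans hd.2⟩,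
    primitive_monotoneOn hΛ hint hd ⟨hd.1.trans hd.2, le_rfl⟩ hd.2⟩

lemma one_add_mul_primitive_mem_Icc (hΛ : ∀ t ∈ Ioc 0 ε, 0 ≤ Λ t)
    (hint : IntegrableOn Λ (Ioc 0 ε)) (hk : 0 ≤ k) (hsmall : k * primitive Λ ε ≤ 1)
    (hd : d ∈ Icc 0 ε) : 1 + k * primitive Λ d ∈ Icc 1 2 := by
  obtain ⟨h₀, h₁⟩ := primitive_mem_Icc hΛ hint hd
  constructor <;> nlinarith [mul_nonneg hk h₀, mul_le_mul_of_nonneg_left h₁ hk]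

lemma hasDerivAt_profile (hcont : ContinuousOn Λ (Ioo 0 ε)) (hΛ : ∀ t ∈ Ioc 0 ε, 0 ≤ Λ t)
    (hint : IntegrableOn Λ (Ioc 0 ε)) (hd : d ∈ Ioo 0 ε) :
    HasDerivAt (profile k Λ) (1 + k * primitive Λ d) d := by
  have hG : ContinuousOn (primitive Λ) (Ioo 0 ε) := fun t ht =>
    (hasDerivAt_primitive ht hcont (hint.mono_set (Ioc_subset_Ioc_right ht.2.le))).continuousAt
      |>.continuousWithinAt
  have hGint := (primitive_monotoneOn hΛ hint).integrableOn_Ioc ⟨hd.1.le, hd.2.le⟩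
  exact (hasDerivAt_id d).add ((hasDerivAt_primitive hd hG hGint).const_mul k)

lemma hasDerivAt_one_add_mul_primitive (hcont : ContinuousOn Λ (Ioo 0 ε))
    (hint : IntegrableOn Λ (Ioc 0 ε)) (hd : d ∈ Ioo 0 ε) :
    HasDerivAt (fun r => 1 + k * primitive Λ r) (k * Λ d) d :=
  ((hasDerivAt_primitive hd hcont (hint.mono_set (Ioc_subset_Ioc_right hd.2.le))).const_mul
    k).const_add 1

lemma profile_mem_Icc (hΛ : ∀ t ∈ Ioc 0 ε, 0 ≤ Λ t) (hint : IntegrableOn Λ (Ioc 0 ε))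
    (hk : 0 ≤ k) (hsmall : k * primitive Λ ε ≤ 1) (hd : d ∈ Icc 0 ε) :
    profile k Λ d ∈ Icc d (2 * d) := by
  have hH : primitive (primitive Λ) d ∈ Icc 0 (d * primitive Λ ε) :=
    ⟨primitive_nonneg fun t ht => (primitive_mem_Icc hΛ hint ⟨ht.1.le, ht.2.trans hd.2⟩).1,
      primitive_le_mul (primitive_monotoneOn hΛ hint) hd⟩
  have hkH : k * primitive (primitive Λ) d ≤ d := calc
    k * primitive (primitive Λ) d ≤ d * (k * primitive Λ ε) :=
      (mul_le_mul_of_nonneg_left hH.2 hk).trans_eq (by ring)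
    _ ≤ d := mul_le_of_le_one_right hd.1 hsmall
  exact ⟨le_add_of_nonneg_right (mul_nonneg hk hH.1), by rw [profile]; linarith⟩

end Profile

section Coefficients

variable {n : ℕ} {ℓ : ℝ}

lemma sum_diag_le_of_forall_quadForm_le {a : Fin n → Fin n → ℝ}
    (h : ∀ y : EuclideanSpace ℝ (Fin n),
      ∑ i, ∑ j, a i j * y i * y j ≤ ℓ * ‖y‖ ^ 2) :
    ∑ i, a i i ≤ n * ℓ := calc
  ∑ i, a i i ≤ ∑ _i : Fin n, ℓ := Finset.sum_le_sum fun i _ => by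
    simpa [PiLp.single_apply, mul_ite, ite_mul, Finset.sum_ite_eq', PiLp.norm_single]
      using h (EuclideanSpace.single i 1)
  _ = n * ℓ := by simp

lemma abs_sum_mul_le {b : Fin n → ℝ} (hb : ∀ i, |b i| ≤ ℓ)
    (x : EuclideanSpace ℝ (Fin n)) :
    |∑ i, b i * x i| ≤ n * ℓ * ‖x‖ := calc
  |∑ i, b i * x i| ≤ ∑ i, |b i| * |x i| := by
    simpa only [abs_mul] using Finset.abs_sum_le_sum_abs (fun i => b i * x i) Finset.univ
  _ ≤ ∑ _i : Fin n, ℓ * ‖x‖ := Finset.sum_le_sum fun i _ =>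
    mul_le_mul (hb i) (PiLp.norm_apply_le x i) (abs_nonneg _) ((abs_nonneg _).trans (hb i))
  _ = n * ℓ * ‖x‖ := by simp [mul_assoc]

end Coefficients

/- At a point `x` with `r = ‖x‖` and `d = R - r`: `p = f'(d)`, `T = tr a`, `Q = ⟨a x, x⟩`,
`B = ⟨b, x⟩`, `F = f(d)`; the right-hand side is then `L[ṽ](x)` for the radial `ṽ`. -/
lemma le_operator_of_bounds {n : ℕ} {R r d k ℓ p T Q B c F : ℝ}
    (hk : k = 2 * n * (2 / R + 1) + 3) (hℓ : 0 < ℓ) (hR : 0 < R) (hr : R / 2 < r)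
    (hp₀ : 0 ≤ p) (hp : p ≤ 2) (hT : T ≤ n * ℓ) (hQ : r ^ 2 ≤ Q)
    (hB : |B| ≤ n * ℓ * r)
    (hd : 0 < d) (hc : -c ≤ ℓ / d) (hF₀ : 0 ≤ F) (hF : F ≤ 2 * d) :
    ℓ ≤ -p / r * T + (k * ℓ / r ^ 2 - -p / r ^ 3) * Q + -p / r * B + c * F := by
  have hr₀ : 0 < r := by linarith
  have hk₀ : 0 ≤ k := by rw [hk]; positivity
  have hpr₀ : -p / r ≤ 0 := div_nonpos_of_nonpos_of_nonneg (by linarith) hr₀.le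
  have hpr : p / r ≤ 4 / R := calc
    p / r ≤ 2 / (R / 2) := div_le_div₀ zero_le_two hp (by positivity) hr.le
    _ = 4 / R := by field_simp; norm_num
  have hsecond : k * ℓ + p / r ≤ (k * ℓ / r ^ 2 - -p / r ^ 3) * Q := calc
    k * ℓ + p / r = (k * ℓ / r ^ 2 - -p / r ^ 3) * r ^ 2 := by field_simp; ring
    _ ≤ _ := mul_le_mul_of_nonneg_left hQ (by rw [neg_div, sub_neg_eq_add]; positivity)
  have htrace : -(4 / R * (n * ℓ)) ≤ -p / r * T := calc
    -(4 / R * (n * ℓ)) ≤ -p / r * (n * ℓ) := by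
      rw [neg_div, neg_mul]; gcongr
    _ ≤ -p / r * T := mul_le_mul_of_nonpos_left hT hpr₀
  have hdrift : -(2 * n * ℓ) ≤ -p / r * B := by
    have : |-p / r * B| ≤ 2 * n * ℓ := calc
      |-p / r * B| = p / r * |B| := by rw [abs_mul, abs_div, abs_neg, abs_of_nonneg hp₀,
        abs_of_pos hr₀]
      _ ≤ 2 / r * (n * ℓ * r) := by gcongr
      _ = 2 * n * ℓ := by field_simp
    linarith [neg_abs_le (-p / r * B)]
  have hzeroth : -(2 * ℓ) ≤ c * F := calc
    -(2 * ℓ) = -(ℓ / d) * (2 * d) := by field_simp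
    _ ≤ -(ℓ / d) * F := mul_le_mul_of_nonpos_left hF (by have := div_pos hℓ hd; linarith)
    _ ≤ c * F := mul_le_mul_of_nonneg_right (by linarith) hF₀
  have hkℓ : k * ℓ = 4 / R * (n * ℓ) + 2 * n * ℓ + 3 * ℓ := by rw [hk]; ring
  linarith [div_nonneg hp₀ hr₀.le]

lemma hasFDerivAt_norm {F : Type*} [NormedAddCommGroup F] [InnerProductSpace ℝ F] {x : F}
    (hx : x ≠ 0) : HasFDerivAt (‖·‖) (‖x‖⁻¹ • innerSL ℝ x) x := by
  have h := (hasStrictFDerivAt_norm_sq x).hasFDerivAt.sqrt (by positivity)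
  simp only [Real.sqrt_sq (norm_nonneg _)] at h
  convert h using 1
  ext y
  simp only [smul_apply, smul_eq_mul, nsmul_eq_mul]
  field_simp
  ring

section Radial

variable {n : ℕ} {g g' : ℝ → ℝ} {g₀ g'' : ℝ} {x : EuclideanSpace ℝ (Fin n)}

lemma pd_comp_norm (hx : x ≠ 0) (hg : HasDerivAt g g₀ ‖x‖) (i : Fin n) :
    pd i (fun y => g ‖y‖) x = g₀ / ‖x‖ * x i := by
  have hder : HasFDerivAt (fun y => g ‖y‖) (g₀ • ‖x‖⁻¹ • innerSL ℝ x) x :=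
    hg.comp_hasFDerivAt x (hasFDerivAt_norm hx)
  rw [pd, hder.fderiv]
  simp only [smul_apply, innerSL_apply_apply, EuclideanSpace.inner_single_right, smul_eq_mul,
    one_mul, conj_trivial]
  ring

lemma pd_pd_comp_norm (hx : x ≠ 0) (hg : ∀ᶠ s in 𝓝 ‖x‖, HasDerivAt g (g' s) s)
    (hg' : HasDerivAt g' g'' ‖x‖) (i j : Fin n) :
    pd i (pd j fun y => g ‖y‖) x =
      g' ‖x‖ / ‖x‖ * (if j = i then 1 else 0) +
        (g'' / ‖x‖ ^ 2 - g' ‖x‖ / ‖x‖ ^ 3) * x i * x j := by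
  have hpd : pd j (fun y => g ‖y‖) =ᶠ[𝓝 x] fun y => g' ‖y‖ / ‖y‖ * y j := by
    filter_upwards [continuous_norm.continuousAt.eventually hg, eventually_ne_nhds hx]
      with y hgy hy
    exact pd_comp_norm hy hgy j
  have hquot :
      HasDerivAt (fun s => g' s / s) ((g'' * ‖x‖ - g' ‖x‖ * 1) / ‖x‖ ^ 2) ‖x‖ :=
    hg'.div (hasDerivAt_id _) (norm_ne_zero_iff.2 hx)
  have hder : HasFDerivAt (fun y => g' ‖y‖ / ‖y‖ * y j) _ x :=
    (hquot.comp_hasFDerivAt x (hasFDerivAt_norm hx)).mul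
      (EuclideanSpace.proj j : EuclideanSpace ℝ (Fin n) →L[ℝ] ℝ).hasFDerivAt
  rw [pd, hpd.fderiv_eq, hder.fderiv]
  simp only [add_apply, smul_apply, innerSL_apply_apply,
    EuclideanSpace.inner_single_right, conj_trivial, PiLp.proj_apply,
    PiLp.single_apply, smul_eq_mul, Function.comp_apply]
  field_simp

lemma sum_mul_pd_comp_norm (hx : x ≠ 0) (hg : HasDerivAt g g₀ ‖x‖) (b : Fin n → ℝ) :
    ∑ i, b i * pd i (fun y => g ‖y‖) x = g₀ / ‖x‖ * ∑ i, b i * x i := by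
  simp only [pd_comp_norm hx hg, Finset.mul_sum]
  exact Finset.sum_congr rfl fun i _ => by ring

lemma sum_sum_mul_pd_pd_comp_norm (hx : x ≠ 0)
    (hg : ∀ᶠ s in 𝓝 ‖x‖, HasDerivAt g (g' s) s) (hg' : HasDerivAt g' g'' ‖x‖)
    (a : Fin n → Fin n → ℝ) :
    ∑ i, ∑ j, a i j * pd i (pd j fun y => g ‖y‖) x =
      g' ‖x‖ / ‖x‖ * ∑ i, a i i +
        (g'' / ‖x‖ ^ 2 - g' ‖x‖ / ‖x‖ ^ 3) * ∑ i, ∑ j, a i j * x i * x j := by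
  simp only [pd_pd_comp_norm hx hg hg', mul_add, Finset.sum_add_distrib, mul_ite, mul_one,
    mul_zero, Finset.sum_ite_eq', Finset.mem_univ, if_true, Finset.mul_sum]
  congr 1
  · exact Finset.sum_congr rfl fun i _ => by ring
  · exact Finset.sum_congr rfl fun i _ => Finset.sum_congr rfl fun j _ => by ring

end Radial

lemma ball_diff_closure_ball {E : Type*} [NormedAddCommGroup E] [NormedSpace ℝ E] {ρ R : ℝ}
    (hρ : ρ ≠ 0) : ball (0 : E) R \ closure (ball 0 ρ) = (‖·‖) ⁻¹' Ioo ρ R := by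
  ext x
  simp [closure_ball _ hρ, and_comm]

theorem stmt6_general (n : ℕ) (R ε : ℝ) (hR : 0 < R)
    (hε' : ε < min 1 (R / 2))
    (k : ℝ) (hk : k = 2 * n * (2 / R + 1) + 3)
    (Λ : ℝ → ℝ)
    (hΛcont : ContinuousOn Λ (Set.Ioc 0 ε))
    (hΛpos : ∀ d ∈ Set.Ioc (0 : ℝ) ε, 0 < Λ d)
    (hΛint : IntegrableOn Λ (Set.Ioc 0 ε))
    (hΛsmall : (∫ s in Set.Ioc (0 : ℝ) ε, Λ s) < 1 / k)
    (Ω : Set (EuclideanSpace ℝ (Fin n)))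
    (hΩ : Ω = Metric.ball (0 : EuclideanSpace ℝ (Fin n)) R \
      closure (Metric.ball (0 : EuclideanSpace ℝ (Fin n)) (R - ε)))
    (a : Fin n → Fin n → EuclideanSpace ℝ (Fin n) → ℝ)
    (b : Fin n → EuclideanSpace ℝ (Fin n) → ℝ)
    (c : EuclideanSpace ℝ (Fin n) → ℝ)
    (hell : ∀ x ∈ Ω, ∀ y : EuclideanSpace ℝ (Fin n),
      ‖y‖ ^ 2 ≤ ∑ i, ∑ j, a i j x * y i * y j ∧
      ∑ i, ∑ j, a i j x * y i * y j ≤ Λ (R - ‖x‖) * ‖y‖ ^ 2)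
    (hb : ∀ x ∈ Ω, ∀ i : Fin n, |b i x| ≤ Λ (R - ‖x‖))
    (hc : ∀ x ∈ Ω, -c x ≤ Λ (R - ‖x‖) / (R - ‖x‖))
    (f : ℝ → ℝ)
    (hf : ∀ r, f r = r + k * ∫ s in Set.Ioc (0 : ℝ) r, ∫ t in Set.Ioc (0 : ℝ) s, Λ t)
    (v : EuclideanSpace ℝ (Fin n) → ℝ)
    (hv : ∀ x, v x = f (R - ‖x‖)) :
    ∀ x ∈ Ω,
      Λ (R - ‖x‖) ≤
        (∑ i, ∑ j, a i j x * pd i (pd j v) x) + (∑ i, b i x * pd i v x) + c x * v x ∧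
      0 < Λ (R - ‖x‖) := by
  intro x hx
  have hεR : ε < R / 2 := hε'.trans_le (min_le_right _ _)
  obtain ⟨hr₁, hr₂⟩ : ‖x‖ ∈ Ioo (R - ε) R := by
    rwa [hΩ, ball_diff_closure_ball (by linarith)] at hx
  have hx₀ : x ≠ 0 := norm_pos_iff.1 (by linarith)
  have hd : R - ‖x‖ ∈ Ioo 0 ε := ⟨by linarith, by linarith⟩
  have hℓ : 0 < Λ (R - ‖x‖) := hΛpos _ ⟨hd.1, hd.2.le⟩
  refine ⟨?_, hℓ⟩
  have hΛ : ∀ t ∈ Ioc 0 ε, 0 ≤ Λ t := fun t ht => (hΛpos t ht).le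
  have hcont := hΛcont.mono Ioo_subset_Ioc_self
  have hk₀ : 0 < k := by rw [hk]; positivity
  have hsmall : k * primitive Λ ε ≤ 1 := ((lt_div_iff₀' hk₀).1 hΛsmall).le
  have hg : ∀ᶠ s in 𝓝 ‖x‖,
      HasDerivAt (fun s => profile k Λ (R - s)) (-(1 + k * primitive Λ (R - s))) s := by
    filter_upwards [isOpen_Ioo.mem_nhds ⟨hr₁, hr₂⟩] with s hs
    exact (hasDerivAt_profile hcont hΛ hΛint
      ⟨by linarith [hs.2], by linarith [hs.1]⟩).comp_const_sub R s
  have hg' :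
      HasDerivAt (fun s => -(1 + k * primitive Λ (R - s))) (k * Λ (R - ‖x‖)) ‖x‖ := by
    simpa using (hasDerivAt_one_add_mul_primitive hcont hΛint hd).neg.comp_const_sub R ‖x‖
  rw [show v = fun y => profile k Λ (R - ‖y‖) from funext fun y => (hv y).trans (hf _),
    sum_sum_mul_pd_pd_comp_norm hx₀ hg hg', sum_mul_pd_comp_norm hx₀ hg.self_of_nhds]
  obtain ⟨hp₁, hp₂⟩ :=
    one_add_mul_primitive_mem_Icc hΛ hΛint hk₀.le hsmall ⟨hd.1.le, hd.2.le⟩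
  obtain ⟨hF₁, hF₂⟩ := profile_mem_Icc hΛ hΛint hk₀.le hsmall ⟨hd.1.le, hd.2.le⟩
  exact le_operator_of_bounds hk hℓ hR (by linarith) (zero_le_one.trans hp₁) hp₂
    (sum_diag_le_of_forall_quadForm_le fun y => (hell x hx y).2) (hell x hx x).1
    (abs_sum_mul_le (hb x hx) x) hd.1 (hc x hx) (hd.1.le.trans hF₁) hF₂

theorem stmt6 (n : ℕ) (hn : 1 ≤ n) (R ε : ℝ) (hR : 0 < R)
    (hε : 0 < ε) (hε' : ε < min 1 (R / 2))
    (k : ℝ) (hk : k = 2 * n * (2 / R + 1) + 3)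
    (Λ : ℝ → ℝ)
    (hΛcont : ContinuousOn Λ (Set.Ioc 0 ε))
    (hΛmono : AntitoneOn Λ (Set.Ioc 0 ε))
    (hΛpos : ∀ d ∈ Set.Ioc (0 : ℝ) ε, 0 < Λ d)
    (hΛint : IntegrableOn Λ (Set.Ioc 0 ε))
    (hΛsmall : (∫ s in Set.Ioc (0 : ℝ) ε, Λ s) < 1 / k)
    (Ω : Set (EuclideanSpace ℝ (Fin n)))
    (hΩ : Ω = Metric.ball (0 : EuclideanSpace ℝ (Fin n)) R \
      closure (Metric.ball (0 : EuclideanSpace ℝ (Fin n)) (R - ε)))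
    (a : Fin n → Fin n → EuclideanSpace ℝ (Fin n) → ℝ)
    (b : Fin n → EuclideanSpace ℝ (Fin n) → ℝ)
    (c : EuclideanSpace ℝ (Fin n) → ℝ)
    (hell : ∀ x ∈ Ω, ∀ y : EuclideanSpace ℝ (Fin n),
      ‖y‖ ^ 2 ≤ ∑ i, ∑ j, a i j x * y i * y j ∧
      ∑ i, ∑ j, a i j x * y i * y j ≤ Λ (R - ‖x‖) * ‖y‖ ^ 2)
    (hb : ∀ x ∈ Ω, ∀ i : Fin n, |b i x| ≤ Λ (R - ‖x‖))
    (hc : ∀ x ∈ Ω, -c x ≤ Λ (R - ‖x‖) / (R - ‖x‖))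
    (f : ℝ → ℝ)
    (hf : ∀ r, f r = r + k * ∫ s in Set.Ioc (0 : ℝ) r, ∫ t in Set.Ioc (0 : ℝ) s, Λ t)
    (v : EuclideanSpace ℝ (Fin n) → ℝ)
    (hv : ∀ x, v x = f (R - ‖x‖)) :
    ∀ x ∈ Ω,
      Λ (R - ‖x‖) ≤
        (∑ i, ∑ j, a i j x * pd i (pd j v) x) + (∑ i, b i x * pd i v x) + c x * v x ∧
      0 < Λ (R - ‖x‖) :=
  stmt6_general n R ε hR hε' k hk Λ hΛcont hΛpos hΛint hΛsmall Ω hΩ a b c hell hb hc f hf v hv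
end

section
/- (Counterexample to the BPL without the integrable lower-Lipschitz bound on B) Let Ω ⊂ ℝⁿ be a bounded domain with x_b ∈ ∂Ω admitting an interior ball, let u ≡ 0 on closure Ω, and let v ∈ C^∞(closure Ω) satisfy v > 0 in Ω, v(x_b) = 0, and ∂_ν v(x_b) = 0. Define A_{ij}(x,z,η) = δ_{ij} and B(x,z,η) = −(z/v(x)) Σᵢ v_{x_ix_i}(x). Then Q[u] ≥ 0 and Q[v] ≤ 0 on Ω, Q is elliptic, u < v in Ω, u(x_b) = v(x_b), B is locally lower Lipschitz in z on compact subsets of Ω × ℝ × ℝⁿ, yet ∂_ν u(x_b) = ∂_ν v(x_b), so the boundary point lemma conclusion ∂_ν u(x_b) > ∂_ν v(x_b) fails. -/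
open Set Metric

lemma pd_contDiff {n : ℕ} (i : Fin n) {f : EuclideanSpace ℝ (Fin n) → ℝ}
    (hf : ContDiff ℝ (⊤ : ℕ∞) f) : ContDiff ℝ (⊤ : ℕ∞) (pd i f) := by
  have h : ContDiff ℝ (⊤ : ℕ∞) (fderiv ℝ f) := hf.fderiv_right (by simp)
  exact h.clm_apply contDiff_const

theorem stmt12 {n : ℕ} (Ω : Set (EuclideanSpace ℝ (Fin n)))
    (hΩo : IsOpen Ω) (hΩc : IsConnected Ω) (hΩb : Bornology.IsBounded Ω)
    (xb : EuclideanSpace ℝ (Fin n)) (hxb : xb ∈ frontier Ω)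
    (xb' : EuclideanSpace ℝ (Fin n)) (Rb : ℝ) (hRb : 0 < Rb)
    (hin : Metric.ball xb' Rb ⊆ Ω) (htouch : xb ∈ Metric.sphere xb' Rb)
    -- u ≡ 0
    (u : EuclideanSpace ℝ (Fin n) → ℝ) (hu : ∀ x, u x = 0)
    -- v ∈ C^∞(closure Ω), v > 0 in Ω, v(x_b) = 0, ∂_ν v(x_b) = 0
    (v : EuclideanSpace ℝ (Fin n) → ℝ) (hv : ContDiff ℝ (⊤ : ℕ∞) v)
    (hvpos : ∀ x ∈ Ω, 0 < v x) (hvb : v xb = 0)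
    (hvν : fderiv ℝ v xb (Rb⁻¹ • (xb - xb')) = 0)
    -- A_{ij} = δ_{ij} and B(x,z,η) = -(z/v(x)) Σᵢ v_{x_ix_i}(x)
    (A : Fin n → Fin n → EuclideanSpace ℝ (Fin n) → ℝ → EuclideanSpace ℝ (Fin n) → ℝ)
    (hA : ∀ i j x z η, A i j x z η = if i = j then (1 : ℝ) else 0)
    (B : EuclideanSpace ℝ (Fin n) → ℝ → EuclideanSpace ℝ (Fin n) → ℝ)
    (hB : ∀ x z η, B x z η = -(z / v x) * ∑ i, pd i (pd i v) x) :
    -- Q[u] ≥ 0 on Ω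
    (∀ x ∈ Ω, 0 ≤ (∑ i, ∑ j, A i j x (u x) (WithLp.toLp 2 (fun l => pd l u x)) * pd i (pd j u) x) +
        B x (u x) (WithLp.toLp 2 (fun l => pd l u x))) ∧
    -- Q[v] ≤ 0 on Ω
    (∀ x ∈ Ω, (∑ i, ∑ j, A i j x (v x) (WithLp.toLp 2 (fun l => pd l v x)) * pd i (pd j v) x) +
        B x (v x) (WithLp.toLp 2 (fun l => pd l v x)) ≤ 0) ∧
    -- Q is elliptic (with respect to u)
    (∀ x ∈ Ω, ∀ y : EuclideanSpace ℝ (Fin n),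
      ‖y‖ ^ 2 ≤ ∑ i, ∑ j, A i j x (u x) (WithLp.toLp 2 (fun l => pd l u x)) * y i * y j) ∧
    -- u < v in Ω and u(x_b) = v(x_b)
    (∀ x ∈ Ω, u x < v x) ∧ u xb = v xb ∧
    -- B is locally lower Lipschitz in z on compact subsets of Ω × ℝ × ℝⁿ
    (∀ K : Set (EuclideanSpace ℝ (Fin n)), IsCompact K → K ⊆ Ω →
      ∀ Mz : ℝ, 0 < Mz → ∃ MK : ℝ, 0 < MK ∧
        ∀ x ∈ K, ∀ z₁ ∈ Set.Icc (-Mz) Mz, ∀ z₂ ∈ Set.Icc (-Mz) Mz,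
          ∀ η₁ η₂ : EuclideanSpace ℝ (Fin n), z₂ ≤ z₁ →
            -(MK * (z₁ - z₂)) ≤ B x z₁ η₁ - B x z₂ η₂) ∧
    -- yet the outward normal derivatives agree: the BPL conclusion fails
    fderiv ℝ u xb (Rb⁻¹ • (xb - xb')) = fderiv ℝ v xb (Rb⁻¹ • (xb - xb')) ∧
    ¬ (fderiv ℝ v xb (Rb⁻¹ • (xb - xb')) < fderiv ℝ u xb (Rb⁻¹ • (xb - xb'))) := by
  -- basic facts
  have hu0 : u = fun _ => (0 : ℝ) := funext hu
  have hpdu : ∀ (l : Fin n) x, pd l u x = 0 := by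
    intro l x
    simp [pd, hu0]
  have hpdpdu : ∀ (i j : Fin n) x, pd i (pd j u) x = 0 := by
    intro i j x
    have : pd j u = fun _ => (0 : ℝ) := funext (fun x => hpdu j x)
    simp [pd, this]
  have hfu : fderiv ℝ u = fun _ => 0 := by
    funext x; rw [hu0]; exact fderiv_const_apply 0
  set S : EuclideanSpace ℝ (Fin n) → ℝ := fun x => ∑ i, pd i (pd i v) x with hS
  have hScont : Continuous S := by
    apply continuous_finset_sum
    intro i _
    exact ((pd_contDiff i (pd_contDiff i hv)).continuous)
  refine ⟨?_, ?_, ?_, ?_, ?_, ?_, ?_, ?_⟩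
  · intro x hx
    simp [hB, hA, hpdpdu, hu]
  · intro x hx
    have hvx := (hvpos x hx).ne'
    have hsum : (∑ i, ∑ j, A i j x (v x) (WithLp.toLp 2 (fun l => pd l v x)) * pd i (pd j v) x) = S x := by
      rw [hS]
      refine Finset.sum_congr rfl (fun i _ => ?_)
      rw [Finset.sum_eq_single i]
      · simp [hA]
      · intro j _ hji; simp [hA, Ne.symm hji]
      · simp
    rw [hsum, hB, div_self hvx]
    ring_nf
    simp [hS]
  · intro x hx y
    have hsum : (∑ i, ∑ j, A i j x (u x) (WithLp.toLp 2 (fun l => pd l u x)) * y i * y j) = ∑ i, y i * y i := by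
      refine Finset.sum_congr rfl (fun i _ => ?_)
      rw [Finset.sum_eq_single i]
      · simp [hA]
      · intro j _ hji; simp [hA, Ne.symm hji]
      · simp
    rw [hsum]
    have : ‖y‖ ^ 2 = ∑ i, y i * y i := by
      rw [EuclideanSpace.norm_eq, Real.sq_sqrt (by positivity)]
      refine Finset.sum_congr rfl (fun i _ => ?_)
      rw [Real.norm_eq_abs, sq_abs, sq]
    rw [this]
  · intro x hx; rw [hu x]; exact hvpos x hx
  · rw [hu xb, hvb]
  · intro K hK hKΩ Mz hMz
    have hvcont : ContinuousOn (fun x => S x / v x) K :=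
      (hScont.continuousOn).div (hv.continuous.continuousOn)
        (fun x hx => (hvpos x (hKΩ hx)).ne')
    obtain ⟨C, hC⟩ := hK.exists_bound_of_continuousOn hvcont
    refine ⟨max C 1, lt_of_lt_of_le one_pos (le_max_right _ _), ?_⟩
    intro x hx z₁ hz₁ z₂ hz₂ η₁ η₂ hz
    have hfx : S x / v x ≤ max C 1 :=
      le_trans (le_trans (le_abs_self _) (hC x hx)) (le_max_left _ _)
    have key : (z₁ - z₂) * (S x / v x) ≤ (z₁ - z₂) * max C 1 :=
      mul_le_mul_of_nonneg_left hfx (by linarith)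
    have hBdiff : B x z₁ η₁ - B x z₂ η₂ = -((z₁ - z₂) * (S x / v x)) := by
      rw [hB, hB]; ring
    rw [hBdiff]
    nlinarith
  · rw [hfu, hvν]; rfl
  · rw [hfu, hvν]
    simp
end

section
/- (Chain estimate) Let w : Ω_b → (0,∞) be continuous on a cone Ω_b, and suppose there is C > 0 such that (1/rⁿ)∫_{B_{2r}(x)} w dx ≤ C·min_{closure B_r(x)} w for all balls with B_{2r}(x) ⊂ Ω_b (weak Harnack with uniform constant). Let B_{r_k}(y_k) be the chain of balls from the cone ball chain with B_{r_k/3}(y_k) ⊂ B_{2r_{k+1}/3}(y_{k+1}). Then min_{closure B_{r_k/3}(y_k)} w ≥ L^k · min_{closure B_{r_0/3}(y_0)} w for all k ∈ ℕ, where L = ω_n/(C·3ⁿ) and ω_n is the volume of the unit ball in ℝⁿ. -/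
/-!
On each link of the chain, the minimum of `w` on `B_{r_k/3}(y_k)` times the volume of that ball is
at most the integral of `w` over it, hence over the larger ball `B_{2r_{k+1}/3}(y_{k+1})`, which the
weak Harnack inequality bounds by `C (r_{k+1}/3)ⁿ` times the minimum of `w` on `B_{r_{k+1}/3}(y_{k+1})`.
As `r_{k+1} ≤ r_k`, the powers of the radii cancel and leave `ω_n m_k ≤ C m_{k+1}`; iterating this
one-step bound gives the geometric lower bound.
-/

open Set Metric MeasureTheory Module

theorem pow_mul_le_of_mul_le_succ {α : Type*} [Semiring α] [PartialOrder α] [IsOrderedRing α]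
    {L : α} {m : ℕ → α} (hL : 0 ≤ L) (h : ∀ k, L * m k ≤ m (k + 1)) (k : ℕ) :
    L ^ k * m 0 ≤ m k := by
  induction k with
  | zero => simp
  | succ k ih =>
    calc L ^ (k + 1) * m 0 = L * (L ^ k * m 0) := by rw [pow_succ', mul_assoc]
      _ ≤ L * m k := mul_le_mul_of_nonneg_left ih hL
      _ ≤ m (k + 1) := h k

theorem sInf_image_mul_measureReal_le_setIntegral {X : Type*} [MeasurableSpace X] {μ : Measure X}
    {f : X → ℝ} {s K : Set X} (hbdd : BddBelow (f '' K)) (hsK : s ⊆ K) (hs : MeasurableSet s)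
    (hμs : μ s ≠ ⊤) (hf : IntegrableOn f s μ) :
    sInf (f '' K) * μ.real s ≤ ∫ x in s, f x ∂μ :=
  setIntegral_ge_of_const_le_real hs hμs
    (fun _ hx => csInf_le hbdd (mem_image_of_mem f (hsK hx))) hf

section Haar

variable {E : Type*} [NormedAddCommGroup E] [NormedSpace ℝ E] [FiniteDimensional ℝ E]
  [MeasurableSpace E] [BorelSpace E] (μ : Measure E) [μ.IsAddHaarMeasure]

theorem Measure.addHaar_real_ball_of_pos (x : E) {r : ℝ} (hr : 0 < r) :
    μ.real (ball x r) = r ^ finrank ℝ E * μ.real (ball 0 1) := by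
  rw [measureReal_def, Measure.addHaar_ball_of_pos μ x hr, ENNReal.toReal_mul,
    ENNReal.toReal_ofReal (by positivity), measureReal_def]

def WeakHarnack (Ω : Set E) (w : E → ℝ) (C : ℝ) : Prop :=
  ∀ (x : E) (r : ℝ), 0 < r → closedBall x (2 * r) ⊆ Ω →
    (1 / r ^ finrank ℝ E) * ∫ z in ball x (2 * r), w z ∂μ ≤ C * sInf (w '' closedBall x r)

variable {μ}

theorem WeakHarnack.measureReal_unitBall_mul_sInf_le {Ω : Set E} {w : E → ℝ} {C : ℝ}
    (hH : WeakHarnack μ Ω w C) (hw : ContinuousOn w Ω) (hw0 : ∀ x ∈ Ω, 0 ≤ w x)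
    {y y' : E} {s t : ℝ} (ht : 0 < t) (hts : t ≤ s) (hΩ : closedBall y' (2 * t) ⊆ Ω)
    (hsub : ball y s ⊆ ball y' (2 * t)) :
    μ.real (ball 0 1) * sInf (w '' closedBall y s) ≤ C * sInf (w '' closedBall y' t) := by
  set d := finrank ℝ E
  set m := sInf (w '' closedBall y s)
  have hs : 0 < s := ht.trans_le hts
  have hsΩ : closedBall y s ⊆ Ω := by
    rw [← closure_ball y hs.ne']
    exact (closure_minimal (hsub.trans ball_subset_closedBall) isClosed_closedBall).trans hΩ
  have hm0 : 0 ≤ m := Real.sInf_nonneg (by rintro _ ⟨x, hx, rfl⟩; exact hw0 x (hsΩ hx))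
  have hint : IntegrableOn w (ball y' (2 * t)) μ :=
    ((hw.mono hΩ).integrableOn_compact (isCompact_closedBall _ _)).mono_set
      ball_subset_closedBall
  have hlower : m * μ.real (ball y s) ≤ ∫ z in ball y s, w z ∂μ :=
    sInf_image_mul_measureReal_le_setIntegral
      ((isCompact_closedBall y s).bddBelow_image (hw.mono hsΩ)) ball_subset_closedBall
      measurableSet_ball measure_ball_lt_top.ne (hint.mono_set hsub)
  have hmono : ∫ z in ball y s, w z ∂μ ≤ ∫ z in ball y' (2 * t), w z ∂μ :=
    setIntegral_mono_set hint
      (ae_restrict_of_forall_mem measurableSet_ball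
        fun x hx => hw0 x (hΩ (ball_subset_closedBall hx)))
      hsub.eventuallyLE
  have htd : 0 < t ^ d := pow_pos ht d
  have hupper : ∫ z in ball y' (2 * t), w z ∂μ ≤ t ^ d * (C * sInf (w '' closedBall y' t)) := by
    have := hH y' t ht hΩ
    rwa [one_div, inv_mul_le_iff₀ htd] at this
  have hradii : t ^ d * (μ.real (ball 0 1) * m) ≤ m * μ.real (ball y s) := by
    rw [Measure.addHaar_real_ball_of_pos μ y hs]
    calc t ^ d * (μ.real (ball 0 1) * m) ≤ s ^ d * (μ.real (ball 0 1) * m) := by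
          gcongr
      _ = m * (s ^ d * μ.real (ball 0 1)) := by ring
  exact le_of_mul_le_mul_left (hradii.trans (hlower.trans (hmono.trans hupper))) htd

end Haar

theorem stmt17 {n : ℕ} (Ωb : Set (EuclideanSpace ℝ (Fin n)))
    (w : EuclideanSpace ℝ (Fin n) → ℝ)
    (hw : ContinuousOn w Ωb) (hwpos : ∀ x ∈ Ωb, 0 < w x)
    (C : ℝ) (hC : 0 < C)
    -- weak Harnack inequality with a constant uniform over all admissible balls
    (harnack : ∀ (x : EuclideanSpace ℝ (Fin n)) (r : ℝ), 0 < r →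
      Metric.closedBall x (2 * r) ⊆ Ωb →
      (1 / r ^ n) * ∫ z in Metric.ball x (2 * r), w z ≤
        C * sInf (w '' Metric.closedBall x r))
    -- the chain of balls from the cone ball chain
    (y : ℕ → EuclideanSpace ℝ (Fin n)) (r : ℕ → ℝ)
    (hrpos : ∀ k, 0 < r k) (hrmono : ∀ k, r (k + 1) ≤ r k)
    (hball : ∀ k, Metric.closedBall (y k) (2 * r k) ⊆ Ωb)
    (hnest : ∀ k, Metric.ball (y k) (r k / 3) ⊆
      Metric.ball (y (k + 1)) (2 * r (k + 1) / 3))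
    (L : ℝ)
    (hL : L = (MeasureTheory.volume
        (Metric.ball (0 : EuclideanSpace ℝ (Fin n)) 1)).toReal / (C * 3 ^ n)) :
    ∀ k : ℕ,
      L ^ k * sInf (w '' Metric.closedBall (y 0) (r 0 / 3)) ≤
        sInf (w '' Metric.closedBall (y k) (r k / 3)) := by
  have hH : WeakHarnack volume Ωb w C := by
    unfold WeakHarnack
    rwa [finrank_euclideanSpace_fin]
  have hm0 : ∀ k, 0 ≤ sInf (w '' closedBall (y k) (r k / 3)) := fun k =>
    Real.sInf_nonneg <| by
      rintro _ ⟨x, hx, rfl⟩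
      exact (hwpos x (hball k (closedBall_subset_closedBall (by linarith [hrpos k]) hx))).le
  have hL0 : 0 ≤ L := by rw [hL]; positivity
  refine pow_mul_le_of_mul_le_succ (m := fun k => sInf (w '' closedBall (y k) (r k / 3))) hL0
    fun k => ?_
  have hr' : 0 < r (k + 1) / 3 := by linarith [hrpos (k + 1)]
  have hΩ : closedBall (y (k + 1)) (2 * (r (k + 1) / 3)) ⊆ Ωb := by
    rw [← mul_div_assoc]
    exact (closedBall_subset_closedBall (by linarith)).trans (hball (k + 1))
  have hsub : ball (y k) (r k / 3) ⊆ ball (y (k + 1)) (2 * (r (k + 1) / 3)) := by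
    rw [← mul_div_assoc]; exact hnest k
  have hstep := hH.measureReal_unitBall_mul_sInf_le hw (fun x hx => (hwpos x hx).le) hr'
    (by linarith [hrmono k]) hΩ hsub
  rw [hL, div_mul_eq_mul_div, div_le_iff₀ (by positivity)]
  calc _ ≤ C * sInf (w '' closedBall (y (k + 1)) (r (k + 1) / 3)) := hstep
    _ ≤ _ := by
      rw [mul_comm]
      exact mul_le_mul_of_nonneg_left
        (le_mul_of_one_le_right hC.le (one_le_pow₀ (by norm_num))) (hm0 _)
end
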